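/- If n is a positive integer with y(n) ≤ 0, then x(n) ≤ −r(n) − 3 ≤ −6, where x(n) = z(n) − (r(n)+1)·m(n). -/

import Mathlib

/-!
Since `n ≤ 2 ^ r`, the condition `y n ≤ 0`, i.e. `2 ^ (c - m) ≤ n ^ (m - 1)`, forces
`c - m ≤ r (m - 1)`. Together with `3 z < 2 n` this linear inequality in `z`, `m`, `r` and the
product `r m` is exactly `x ≤ -r - 3`. For `n ≤ 4` it cannot hold at all, because then `r, m ≤ 2`
makes its right-hand side too small; hence `n ≥ 5` and `r ≥ 3`.
-/

lemma exponent_le_of_two_zpow_le_zpow {K : Type*} [Field K] [LinearOrder K]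
    [IsStrictOrderedRing K] {n r : ℕ} {e k : ℤ} (hn : n ≤ 2 ^ r) (hk : 0 ≤ k)
    (h : (2 : K) ^ e ≤ (n : K) ^ k) : e ≤ r * k := by
  lift k to ℕ using hk
  have hn' : (n : K) ≤ 2 ^ r := by exact_mod_cast hn
  have h2 : (2 : K) ^ e ≤ (2 : K) ^ ((r * k : ℕ) : ℤ) :=
    calc (2 : K) ^ e ≤ (n : K) ^ k := by exact_mod_cast h
      _ ≤ ((2 : K) ^ r) ^ k := pow_le_pow_left₀ n.cast_nonneg hn' k
      _ = (2 : K) ^ ((r * k : ℕ) : ℤ) := by rw [zpow_natCast, pow_mul]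
  exact_mod_cast (zpow_le_zpow_iff_right₀ (by norm_num : (1 : K) < 2)).mp h2

section

variable {n z m r : ℤ}

lemma sub_add_one_mul_le_of_exponent_le (hz : 3 * z < 2 * n)
    (h : 2 * n - 2 * z + 2 - m ≤ r * (m - 1)) : z - (r + 1) * m ≤ -r - 3 := by
  linarith

lemma two_mul_add_two_le_of_exponent_le (hz : 3 * z < 2 * n) (hm : m ≤ 2) (hr : 0 ≤ r)
    (h : 2 * n - 2 * z + 2 - m ≤ r * (m - 1)) : 2 * n + 2 ≤ 3 * r := by
  nlinarith

end

lemma three_le_of_exponent_le {n m r : ℕ} {z : ℤ} (hn : 1 ≤ n) (hz : 3 * z < 2 * (n : ℤ))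
    (hm : (m : ℤ) ^ 2 ≤ 2 * (n : ℤ)) (hr : n ≤ 2 ^ r) (hr_min : ∀ s : ℕ, n ≤ 2 ^ s → r ≤ s)
    (h : 2 * (n : ℤ) - 2 * z + 2 - m ≤ r * ((m : ℤ) - 1)) : 3 ≤ r := by
  by_contra! hr3
  have hn4 : n ≤ 4 := hr.trans (Nat.pow_le_pow_right (by norm_num) (by omega : r ≤ 2))
  have hm2 : (m : ℤ) ≤ 2 := by nlinarith
  have key := two_mul_add_two_le_of_exponent_le hz hm2 (by positivity) h
  have hr1 : r ≤ 1 := hr_min 1 (by omega)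
  omega

theorem stmt
    (z : ℕ → ℤ) (m r : ℕ → ℕ) (c x : ℕ → ℤ) (y : ℕ → ℚ)
    (hz : ∀ n : ℕ, 1 ≤ n → 3 * z n < 2 * (n : ℤ) ∧ ∀ w : ℤ, 3 * w < 2 * (n : ℤ) → w ≤ z n)
    (hm : ∀ n : ℕ, 1 ≤ n → (m n : ℤ) ^ 2 ≤ 2 * (n : ℤ) ∧ ∀ w : ℕ, (w : ℤ) ^ 2 ≤ 2 * (n : ℤ) → w ≤ m n)
    (hr : ∀ n : ℕ, 1 ≤ n → n ≤ 2 ^ r n ∧ ∀ s : ℕ, n ≤ 2 ^ s → r n ≤ s)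
    (hc : ∀ n : ℕ, c n = 2 * (n : ℤ) - 2 * z n + 2)
    (hx : ∀ n : ℕ, x n = z n - ((r n : ℤ) + 1) * (m n : ℤ))
    (hy : ∀ n : ℕ, y n = (2 : ℚ) ^ (c n - (m n : ℤ)) - (n : ℚ) ^ ((m n : ℤ) - 1)) :
    ∀ n : ℕ, 1 ≤ n → y n ≤ 0 → x n ≤ -(r n : ℤ) - 3 ∧ -(r n : ℤ) - 3 ≤ -6 := by
  intro n hn hyn
  obtain ⟨hz_lt, -⟩ := hz n hn
  obtain ⟨hm_sq, hm_max⟩ := hm n hn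
  obtain ⟨hr_le, hr_min⟩ := hr n hn
  have hm_pos : 1 ≤ m n := hm_max 1 (by push_cast; omega)
  have hexp : 2 * (n : ℤ) - 2 * z n + 2 - m n ≤ r n * ((m n : ℤ) - 1) := by
    rw [← hc n]
    refine exponent_le_of_two_zpow_le_zpow (K := ℚ) hr_le (by omega) ?_
    rw [hy] at hyn
    exact sub_nonpos.mp hyn
  refine ⟨hx n ▸ sub_add_one_mul_le_of_exponent_le hz_lt hexp, ?_⟩
  have := three_le_of_exponent_le hn hz_lt hm_sq hr_le hr_min hexp
  omega
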